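/- arXiv:2005.11252 — 10 statements merged into one kernel-verified Lean document; each statement's English description precedes it below -/
import Mathlib

section
/- Let X be an n×n real matrix with all entries non-zero. Then G(X) satisfies social balance (i.e., X_ii > 0 for all i and sgn(X_ij)·sgn(X_jk)·sgn(X_ki) = 1 for all i,j,k) if and only if X_ii > 0 for all i and for every pair i,j, either sgn(X_i*) = sgn(X_j*) (entrywise equality of sign rows) or sgn(X_i*) = −sgn(X_j*). -/
lemma sign_pm {x : ℝ} (hx : x ≠ 0) : Real.sign x = 1 ∨ Real.sign x = -1 := by
  rcases hx.lt_or_gt with h | h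
  · exact Or.inr (Real.sign_of_neg h)
  · exact Or.inl (Real.sign_of_pos h)

/-- A complete signed matrix (all entries non-zero) satisfies social balance
(positive diagonal and all triad sign-products equal 1) iff it has positive
diagonal and every pair of sign rows are equal or opposite. -/
theorem social_balance_iff_sign_rows (n : ℕ) (X : Matrix (Fin n) (Fin n) ℝ)
    (hX : ∀ i j, X i j ≠ 0) :
    ((∀ i, 0 < X i i) ∧
      ∀ i j k, Real.sign (X i j) * Real.sign (X j k) * Real.sign (X k i) = 1)
    ↔ ((∀ i, 0 < X i i) ∧
      ∀ i j, (∀ k, Real.sign (X i k) = Real.sign (X j k)) ∨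
             (∀ k, Real.sign (X i k) = - Real.sign (X j k))) := by
  constructor
  · rintro ⟨hd, ht⟩
    refine ⟨hd, fun i j => ?_⟩
    have hsym : ∀ a b, Real.sign (X a b) = Real.sign (X b a) := by
      intro a b
      have h := ht a b b
      have hbb : Real.sign (X b b) = 1 := Real.sign_of_pos (hd b)
      rcases sign_pm (hX a b) with h1 | h1 <;>
        rcases sign_pm (hX b a) with h2 | h2 <;>
        rw [h1, h2, hbb] at h <;> rw [h1, h2] <;> (revert h; norm_num)
    rcases sign_pm (hX i j) with hij | hij
    · left
      intro k
      have h := ht i j k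
      have hki := hsym k i
      rw [hij, hki] at h
      rcases sign_pm (hX j k) with h1 | h1 <;>
        rcases sign_pm (hX i k) with h2 | h2 <;>
        rw [h1, h2] at h ⊢ <;> (revert h; norm_num)
    · right
      intro k
      have h := ht i j k
      have hki := hsym k i
      rw [hij, hki] at h
      rcases sign_pm (hX j k) with h1 | h1 <;>
        rcases sign_pm (hX i k) with h2 | h2 <;>
        rw [h1, h2] at h ⊢ <;> (revert h; norm_num)
  · rintro ⟨hd, hp⟩
    refine ⟨hd, fun i j k => ?_⟩
    have hdd : ∀ a, Real.sign (X a a) = 1 := fun a => Real.sign_of_pos (hd a)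
    -- sgn(X i k) * sgn(X k i) = 1
    have hpair : ∀ a b : Fin n, Real.sign (X a b) * Real.sign (X b a) = 1 := by
      intro a b
      rcases hp a b with h | h
      · rw [h b, hdd, ← hdd a, ← h a, hdd]; norm_num
      · have h1 := h b
        have h2 := h a
        rw [hdd] at h1
        rw [h1]
        have : Real.sign (X b a) = -1 := by
          rw [hdd a] at h2; linarith
        rw [this]; norm_num
    rcases hp i j with h | h
    · have hij : Real.sign (X i j) = 1 := by rw [h j, hdd]
      rw [hij, ← h k, one_mul, hpair i k]
    · have hij : Real.sign (X i j) = -1 := by rw [h j, hdd]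
      have hjk : Real.sign (X j k) = - Real.sign (X i k) := by
        have := h k; linarith
      rw [hij, hjk]
      have := hpair i k
      ring_nf
      ring_nf at this
      linarith
end

section
/- Let ρ ∈ {−1,+1}^n, a₁,...,a_m ∈ ℝ with Σ_k a_k² ≠ 0, and Y* the matrix with Y*_{ij} = a_j ρ_i. Then the corresponding appraisal matrix X* = Dg(|Y*|1_m)^{-1} Y* (Y*)ᵀ equals (Σ_k a_k² / Σ_k |a_k|) · ρ ρᵀ, and X* satisfies social balance: X*_ii > 0 for all i and sgn(X*_ij) sgn(X*_jk) sgn(X*_ki) = 1 for all i,j,k. -/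
/-- For an equilibrium opinion matrix Y* = [a₁ρ, ..., aₘρ], the corresponding
appraisal matrix equals (Σ aₖ² / Σ |aₖ|)·ρρᵀ and satisfies social balance. -/
theorem equilibrium_appraisal_social_balance (n m : ℕ) (ρ : Fin n → ℝ)
    (hρ : ∀ i, ρ i = 1 ∨ ρ i = -1)
    (a : Fin m → ℝ) (ha : ∑ k, (a k) ^ 2 ≠ 0)
    (Y : Matrix (Fin n) (Fin m) ℝ) (hY : ∀ i j, Y i j = a j * ρ i)
    (X : Matrix (Fin n) (Fin n) ℝ)
    (hX : ∀ i j, X i j = (∑ k, Y i k * Y j k) / (∑ k, |Y i k|)) :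
    (∀ i j, X i j = ((∑ k, (a k) ^ 2) / (∑ k, |a k|)) * (ρ i * ρ j)) ∧
    (∀ i, 0 < X i i) ∧
    (∀ i j k, Real.sign (X i j) * Real.sign (X j k) * Real.sign (X k i) = 1) := by
  have habs : ∀ i, |ρ i| = 1 := by
    intro i; rcases hρ i with h | h <;> simp [h]
  have hsq : ∀ i, ρ i * ρ i = 1 := by
    intro i; rcases hρ i with h | h <;> simp [h]
  have hS : 0 < ∑ k, (a k) ^ 2 :=
    lt_of_le_of_ne (Finset.sum_nonneg fun k _ => sq_nonneg _) (Ne.symm ha)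
  have hT : 0 < ∑ k, |a k| := by
    rcases lt_or_eq_of_le (Finset.sum_nonneg fun k _ => abs_nonneg (a k)) with h | h
    · exact h
    · exfalso; apply ha
      have hz : ∀ k ∈ Finset.univ, |a k| = 0 :=
        (Finset.sum_eq_zero_iff_of_nonneg fun k _ => abs_nonneg (a k)).mp h.symm
      apply Finset.sum_eq_zero
      intro k _
      have := hz k (Finset.mem_univ k)
      simp [abs_eq_zero.mp this]
  have hc : 0 < (∑ k, (a k) ^ 2) / (∑ k, |a k|) := div_pos hS hT
  have h1 : ∀ i j, X i j = ((∑ k, (a k) ^ 2) / (∑ k, |a k|)) * (ρ i * ρ j) := by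
    intro i j
    rw [hX]
    have e1 : (∑ k, Y i k * Y j k) = (∑ k, (a k) ^ 2) * (ρ i * ρ j) := by
      rw [Finset.sum_mul]
      apply Finset.sum_congr rfl
      intro k _
      rw [hY, hY]; ring
    have e2 : (∑ k, |Y i k|) = ∑ k, |a k| := by
      apply Finset.sum_congr rfl
      intro k _
      rw [hY, abs_mul, habs, mul_one]
    rw [e1, e2]; ring
  refine ⟨h1, ?_, ?_⟩
  · intro i
    rw [h1, hsq, mul_one]; exact hc
  · intro i j k
    have hs : ∀ i j : Fin n, Real.sign (X i j) = ρ i * ρ j := by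
      intro i j
      rw [h1]
      rcases hρ i with h | h <;> rcases hρ j with h' | h' <;>
        simp [h, h', Real.sign_of_pos hc, Real.sign_of_neg (by linarith : -((∑ k, (a k) ^ 2) / (∑ k, |a k|)) < 0)]
    rw [hs, hs, hs]
    rcases hρ i with h | h <;> rcases hρ j with h' | h' <;> rcases hρ k with h'' | h'' <;>
      simp [h, h', h'']
end

section
/- Let Y ∈ ℝ^{n×m} satisfy modulus sign-consensus: there exists ε: {1,...,n} → {−1,+1} and a sign vector s ∈ {−1,0,+1}^m such that sgn(Y_{ij}) = ε(i)·s_j for all i,j, and every row of Y is non-zero. Define X = Dg(|Y|1_m)^{-1} Y Yᵀ and Y⁺ = Dg(|X|1_n)^{-1} X Y. Then sgn(Y⁺_{ij}) = sgn(Y_{ij}) for all i,j. -/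
/-- Under modulus sign-consensus (sgn(Y_{ij}) = ε_i · s_j with ε ∈ {±1}ⁿ,
s ∈ {−1,0,+1}ᵐ), the sign pattern of the opinion matrix is preserved by one
step of the dynamics: sgn(Y⁺_{ij}) = sgn(Y_{ij}). -/
theorem sign_pattern_preserved (n m : ℕ) (Y : Matrix (Fin n) (Fin m) ℝ)
    (hYrow : ∀ i, 0 < ∑ k, |Y i k|)
    (ε : Fin n → ℝ) (hε : ∀ i, ε i = 1 ∨ ε i = -1)
    (s : Fin m → ℝ) (hs : ∀ j, s j = 1 ∨ s j = 0 ∨ s j = -1)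
    (hsgn : ∀ i j, Real.sign (Y i j) = ε i * s j)
    (X : Matrix (Fin n) (Fin n) ℝ)
    (hX : ∀ i j, X i j = (∑ k, Y i k * Y j k) / (∑ k, |Y i k|))
    (Yp : Matrix (Fin n) (Fin m) ℝ)
    (hYp : ∀ i j, Yp i j = (∑ k, X i k * Y k j) / (∑ k, |X i k|)) :
    ∀ i j, Real.sign (Yp i j) = Real.sign (Y i j) := by
  have hεsq : ∀ i, ε i * ε i = 1 := by
    intro i; rcases hε i with h | h <;> rw [h] <;> norm_num
  have hεabs : ∀ i, |ε i| = 1 := by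
    intro i; rcases hε i with h | h <;> rw [h] <;> norm_num
  have key : ∀ x : ℝ, Real.sign x * |x| = x := by
    intro x
    rcases lt_trichotomy x 0 with h | h | h
    · rw [Real.sign_of_neg h, abs_of_neg h]; ring
    · simp [h]
    · rw [Real.sign_of_pos h, abs_of_pos h, one_mul]
  have habs : ∀ i j, Y i j = ε i * s j * |Y i j| := by
    intro i j
    conv_lhs => rw [← key (Y i j)]
    rw [hsgn]
  have hszero : ∀ j, s j = 0 → ∀ i, Y i j = 0 := by
    intro j h0 i
    have := hsgn i j
    rw [h0, mul_zero, Real.sign_eq_zero_iff] at this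
    exact this
  have hsne : ∀ i j, Y i j ≠ 0 → s j ≠ 0 := by
    intro i j h h0; exact h (hszero j h0 i)
  have hYne : ∀ j, s j ≠ 0 → ∀ i, Y i j ≠ 0 := by
    intro j h0 i hcon
    have := hsgn i j
    rw [hcon, Real.sign_zero] at this
    rcases hε i with h | h <;> rw [h] at this <;>
      [exact h0 (by linarith); exact h0 (by linarith)]
  -- the term identity for X
  have hterm : ∀ i j k, Y i k * Y j k = ε i * ε j * (|Y i k| * |Y j k|) := by
    intro i j k
    by_cases h0 : s k = 0
    · rw [hszero k h0 i]; simp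
    · have hs2 : s k * s k = 1 := by
        rcases hs k with h | h | h
        · rw [h]; norm_num
        · exact absurd h h0
        · rw [h]; norm_num
      linear_combination Y j k * habs i k + (ε i * s k * |Y i k|) * habs j k +
        ε i * ε j * |Y i k| * |Y j k| * hs2
  have hApos : ∀ i j, 0 < ∑ k, |Y i k| * |Y j k| := by
    intro i j
    obtain ⟨k, hk⟩ : ∃ k, Y i k ≠ 0 := by
      by_contra h; push_neg at h
      have := hYrow i; simp [h] at this
    have hjk : Y j k ≠ 0 := hYne k (hsne i k hk) j
    refine Finset.sum_pos' (fun t _ => by positivity) ⟨k, Finset.mem_univ k, ?_⟩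
    have h1 : 0 < |Y i k| := abs_pos.mpr hk
    have h2 : 0 < |Y j k| := abs_pos.mpr hjk
    positivity
  have hXval : ∀ i j, X i j = ε i * ε j *
      ((∑ k, |Y i k| * |Y j k|) / (∑ k, |Y i k|)) := by
    intro i j
    rw [hX, Finset.sum_congr rfl (fun k _ => hterm i j k), ← Finset.mul_sum,
      mul_div_assoc]
  have hXabs : ∀ i k, |X i k| = (∑ t, |Y i t| * |Y k t|) / (∑ t, |Y i t|) := by
    intro i k
    rw [hXval, abs_mul, abs_mul, hεabs, hεabs, one_mul, one_mul,
      abs_of_pos (div_pos (hApos i k) (hYrow i))]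
  have hXabspos : ∀ i k, 0 < |X i k| := by
    intro i k; rw [hXabs]; exact div_pos (hApos i k) (hYrow i)
  intro i j
  have hDpos : 0 < ∑ k, |X i k| :=
    Finset.sum_pos (fun k _ => hXabspos i k) ⟨i, Finset.mem_univ i⟩
  have hnum : ∀ k, X i k * Y k j = ε i * s j * (|X i k| * |Y k j|) := by
    intro k
    have hXk : X i k = ε i * ε k * |X i k| := by rw [hXabs, hXval]
    linear_combination Y k j * hXk + (ε i * ε k * |X i k|) * habs k j +
      ε i * s j * |X i k| * |Y k j| * hεsq k
  have hYpval : Yp i j = ε i * s j *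
      ((∑ k, |X i k| * |Y k j|) / (∑ k, |X i k|)) := by
    rw [hYp, Finset.sum_congr rfl (fun k _ => hnum k), ← Finset.mul_sum,
      mul_div_assoc]
  by_cases h0 : s j = 0
  · rw [hYpval, h0, hszero j h0 i]
    simp
  · have hNpos : 0 < ∑ k, |X i k| * |Y k j| := by
      refine Finset.sum_pos (fun k _ => ?_) ⟨i, Finset.mem_univ i⟩
      exact mul_pos (hXabspos i k) (abs_pos.mpr (hYne j h0 k))
    have hq : 0 < (∑ k, |X i k| * |Y k j|) / (∑ k, |X i k|) :=
      div_pos hNpos hDpos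
    rw [hsgn i j, hYpval]
    have hes : ε i * s j = 1 ∨ ε i * s j = -1 := by
      rcases hε i with h | h <;> rcases hs j with h' | h' | h' <;>
        simp [h, h'] at h0 ⊢
    rcases hes with h | h
    · rw [h, one_mul, Real.sign_of_pos hq]
    · rw [h]
      rw [Real.sign_of_neg (by linarith : (-1 : ℝ) * _ < 0)]
end

section
/- Under modulus sign-consensus (all pairs of rows of Y ∈ ℝ^{n×m} have equal or opposite entrywise sign patterns, and all rows are non-zero), the appraisal matrix X = Dg(|Y|1_m)^{-1} Y Yᵀ satisfies |X_ij| ≥ min_{k,l} |Y_{kl}| for all i,j. In particular, if all entries of Y are non-zero, all entries of X are non-zero. -/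
private lemma sign_mul_abs' (x : ℝ) : Real.sign x * |x| = x := by
  rcases lt_trichotomy x 0 with h | h | h
  · rw [Real.sign_of_neg h, abs_of_neg h]; ring
  · simp [h]
  · rw [Real.sign_of_pos h, abs_of_pos h]; ring

/-- Under modulus sign-consensus, every appraisal is bounded below in absolute
value by the minimum absolute opinion entry: |X_{ij}| ≥ min_{k,l} |Y_{kl}|. -/
theorem appraisal_lower_bound (n m : ℕ) (Y : Matrix (Fin n) (Fin m) ℝ)
    (hYrow : ∀ i, 0 < ∑ k, |Y i k|)
    (ε : Fin n → ℝ) (hε : ∀ i, ε i = 1 ∨ ε i = -1)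
    (hsgn : ∀ i j k, Real.sign (Y i k) = ε i * ε j * Real.sign (Y j k))
    (X : Matrix (Fin n) (Fin n) ℝ)
    (hX : ∀ i j, X i j = (∑ k, Y i k * Y j k) / (∑ k, |Y i k|)) :
    (∀ i j, (⨅ k, ⨅ l, |Y k l|) ≤ |X i j|) ∧
    ((∀ k l, Y k l ≠ 0) → ∀ i j, X i j ≠ 0) := by
  have main : ∀ i j, (⨅ k, ⨅ l, |Y k l|) ≤ |X i j| := by
    intro i j
    have key : ∀ k, Y i k * Y j k = ε i * ε j * (|Y i k| * |Y j k|) := by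
      intro k
      have hs := hsgn i j k
      calc Y i k * Y j k
          = (Real.sign (Y i k) * |Y i k|) * (Real.sign (Y j k) * |Y j k|) := by
            rw [sign_mul_abs', sign_mul_abs']
        _ = (ε i * ε j) * (Real.sign (Y j k) * Real.sign (Y j k)) *
              (|Y i k| * |Y j k|) := by rw [hs]; ring
        _ = ε i * ε j * (|Y i k| * |Y j k|) := by
            rcases eq_or_ne (Y j k) 0 with h | h
            · simp [h]
            · have hsq : Real.sign (Y j k) * Real.sign (Y j k) = 1 := by
                rcases h.lt_or_gt with h' | h'
                · rw [Real.sign_of_neg h']; norm_num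
                · rw [Real.sign_of_pos h']; norm_num
              rw [hsq]; ring
    have hT : 0 < ∑ k, |Y i k| := hYrow i
    have hS : 0 ≤ ∑ k, |Y i k| * |Y j k| :=
      Finset.sum_nonneg fun k _ => mul_nonneg (abs_nonneg _) (abs_nonneg _)
    have hee : |ε i * ε j| = 1 := by
      rcases hε i with h | h <;> rcases hε j with h' | h' <;> simp [h, h']
    have hXabs : |X i j| = (∑ k, |Y i k| * |Y j k|) / (∑ k, |Y i k|) := by
      rw [hX i j, Finset.sum_congr rfl fun k _ => key k, ← Finset.mul_sum,
        abs_div, abs_mul, hee, one_mul, abs_of_nonneg hS, abs_of_pos hT]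
    rw [hXabs, le_div_iff₀ hT, Finset.mul_sum]
    refine Finset.sum_le_sum fun k _ => ?_
    have h1 : (⨅ k, ⨅ l, |Y k l|) ≤ ⨅ l, |Y j l| :=
      ciInf_le (Set.Finite.bddBelow (Set.finite_range _)) j
    have h2 : (⨅ l, |Y j l|) ≤ |Y j k| :=
      ciInf_le (Set.Finite.bddBelow (Set.finite_range _)) k
    calc (⨅ k, ⨅ l, |Y k l|) * |Y i k| ≤ |Y j k| * |Y i k| :=
          mul_le_mul_of_nonneg_right (h1.trans h2) (abs_nonneg _)
      _ = |Y i k| * |Y j k| := mul_comm _ _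
  refine ⟨main, fun hne i j => ?_⟩
  have hm : 0 < m := by
    rcases Nat.eq_zero_or_pos m with h | h
    · exfalso; have := hYrow i; subst h; simp at this
    · exact h
    
  have : Nonempty (Fin n) := ⟨i⟩
  have : Nonempty (Fin m) := ⟨⟨0, hm⟩⟩
  obtain ⟨⟨k0, l0⟩, hmin⟩ := Finite.exists_min (fun p : Fin n × Fin m => |Y p.1 p.2|)
  have hc : 0 < ⨅ k, ⨅ l, |Y k l| :=
    lt_of_lt_of_le (abs_pos.mpr (hne k0 l0))
      (le_ciInf fun k => le_ciInf fun l => hmin (k, l))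
  have := lt_of_lt_of_le hc (main i j)
  exact fun h => by simp [h] at this
end

section
/- Under modulus sign-consensus of Y ∈ ℝ^{n×m} (with all rows non-zero), the minimum absolute entry is non-decreasing under one step of the dynamics: with X = Dg(|Y|1_m)^{-1} Y Yᵀ and Y⁺ = Dg(|X|1_n)^{-1} X Y, one has min_{i,j} |Y⁺_{ij}| ≥ min_{i,j} |Y_{ij}|, and moreover for each column j, min_i |Y⁺_{ij}| ≥ min_i |Y_{ij}|. -/
private lemma sign_sq_mul_abs' (x : ℝ) : Real.sign x * Real.sign x * |x| = |x| := by
  rcases lt_trichotomy x 0 with h | h | h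
  · rw [Real.sign_of_neg h]; ring
  · simp [h]
  · rw [Real.sign_of_pos h]; ring

/-- Under modulus sign-consensus, the per-column (and global) minimum absolute
opinion is non-decreasing under one step of the dynamics. -/
theorem min_opinion_nondecreasing (n m : ℕ) (Y : Matrix (Fin n) (Fin m) ℝ)
    (hYrow : ∀ i, 0 < ∑ k, |Y i k|)
    (ε : Fin n → ℝ) (hε : ∀ i, ε i = 1 ∨ ε i = -1)
    (hsgn : ∀ i l k, Real.sign (Y i k) = ε i * ε l * Real.sign (Y l k))
    (X : Matrix (Fin n) (Fin n) ℝ)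
    (hX : ∀ i j, X i j = (∑ k, Y i k * Y j k) / (∑ k, |Y i k|))
    (Yp : Matrix (Fin n) (Fin m) ℝ)
    (hYp : ∀ i j, Yp i j = (∑ k, X i k * Y k j) / (∑ k, |X i k|)) :
    (∀ j, (⨅ i, |Y i j|) ≤ ⨅ i, |Yp i j|) ∧
      (⨅ i, ⨅ j, |Y i j|) ≤ ⨅ i, ⨅ j, |Yp i j| := by
  rcases Nat.eq_zero_or_pos n with hn | hn
  · subst hn
    constructor
    · intro j; simp
    · simp
  have : Nonempty (Fin n) := ⟨⟨0, hn⟩⟩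
  set l : Fin n := ⟨0, hn⟩ with hl
  -- m must be positive
  rcases Nat.eq_zero_or_pos m with hm | hm
  · subst hm
    exact absurd (hYrow l) (by simp)
  have : Nonempty (Fin m) := ⟨⟨0, hm⟩⟩
  have hε2 : ∀ i, ε i * ε i = 1 := by
    intro i; rcases hε i with h | h <;> rw [h] <;> norm_num
  have hεabs : ∀ i, |ε i| = 1 := by
    intro i; rcases hε i with h | h <;> rw [h] <;> norm_num
  -- entries products
  have hterm : ∀ i j r, Y i r * Y j r = ε i * ε j * (|Y i r| * |Y j r|) := by
    intro i j r
    have h1 : Real.sign (Y i r) = ε i * ε j * Real.sign (Y j r) := hsgn i j r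
    have h2 := sign_mul_abs' (Y i r)
    have h3 := sign_mul_abs' (Y j r)
    calc Y i r * Y j r
        = (Real.sign (Y i r) * |Y i r|) * (Real.sign (Y j r) * |Y j r|) := by
          rw [h2, h3]
      _ = ε i * ε j * (Real.sign (Y j r) * Real.sign (Y j r) * |Y j r|)
            * |Y i r| := by rw [h1]; ring
      _ = ε i * ε j * (|Y i r| * |Y j r|) := by rw [sign_sq_mul_abs']; ring
  set A : Fin n → Fin n → ℝ :=
    fun i j => (∑ r, |Y i r| * |Y j r|) / (∑ r, |Y i r|) with hA
  have hAnn : ∀ i j, 0 ≤ A i j := by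
    intro i j
    exact div_nonneg (Finset.sum_nonneg fun r _ =>
      mul_nonneg (abs_nonneg _) (abs_nonneg _)) (le_of_lt (hYrow i))
  have hXA : ∀ i j, X i j = ε i * ε j * A i j := by
    intro i j
    rw [hX, hA]
    rw [Finset.sum_congr rfl fun r _ => hterm i j r, ← Finset.mul_sum]
    ring
  have hXabs : ∀ i j, |X i j| = A i j := by
    intro i j
    rw [hXA, abs_mul, abs_mul, hεabs, hεabs, one_mul, one_mul,
      abs_of_nonneg (hAnn i j)]
  -- positivity of the row sums of |X|
  have hW : ∀ i, 0 < ∑ k, |X i k| := by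
    intro i
    have hd : 0 < A i i := by
      apply div_pos _ (hYrow i)
      by_contra h
      push_neg at h
      have h0 : (∑ r, |Y i r| * |Y i r|) = 0 := le_antisymm h
        (Finset.sum_nonneg fun r _ => mul_nonneg (abs_nonneg _) (abs_nonneg _))
      have := (Finset.sum_eq_zero_iff_of_nonneg
        (fun r _ => mul_nonneg (abs_nonneg (Y i r)) (abs_nonneg (Y i r)))).mp h0
      have hz : (∑ r, |Y i r|) = 0 := by
        apply Finset.sum_eq_zero
        intro r hr
        have := this r hr
        nlinarith [abs_nonneg (Y i r)]
      exact absurd hz (ne_of_gt (hYrow i))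
    calc (0:ℝ) < A i i := hd
      _ = |X i i| := (hXabs i i).symm
      _ ≤ ∑ k, |X i k| :=
        Finset.single_le_sum (fun k _ => abs_nonneg (X i k)) (Finset.mem_univ i)
  -- column sign structure
  set s : Fin m → ℝ := fun j => ε l * Real.sign (Y l j) with hs
  have hcol : ∀ k j, ε k * Y k j = s j * |Y k j| := by
    intro k j
    have h1 : Real.sign (Y k j) = ε k * ε l * Real.sign (Y l j) := hsgn k l j
    calc ε k * Y k j = ε k * (Real.sign (Y k j) * |Y k j|) := by rw [sign_mul_abs']
      _ = (ε k * ε k) * (ε l * Real.sign (Y l j)) * |Y k j| := by rw [h1]; ring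
      _ = s j * |Y k j| := by rw [hε2, hs]; ring
  have hsum : ∀ i j, (∑ k, X i k * Y k j) = ε i * s j * ∑ k, |X i k| * |Y k j| := by
    intro i j
    rw [Finset.mul_sum]
    apply Finset.sum_congr rfl
    intro k _
    calc X i k * Y k j = ε i * ε k * A i k * Y k j := by rw [hXA]
      _ = ε i * A i k * (ε k * Y k j) := by ring
      _ = ε i * A i k * (s j * |Y k j|) := by rw [hcol]
      _ = ε i * s j * (A i k * |Y k j|) := by ring
      _ = ε i * s j * (|X i k| * |Y k j|) := by rw [hXabs]
  -- the key pointwise bound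
  have hbdd : ∀ j, BddBelow (Set.range fun i => |Y i j|) := fun j =>
    Finite.bddBelow_range _
  have key : ∀ i j, (⨅ k, |Y k j|) ≤ |Yp i j| := by
    intro i j
    by_cases hzero : Y l j = 0
    · calc (⨅ k, |Y k j|) ≤ |Y l j| := ciInf_le (hbdd j) l
        _ = 0 := by rw [hzero, abs_zero]
        _ ≤ |Yp i j| := abs_nonneg _
    · have hsabs : |s j| = 1 := by
        rw [hs, abs_mul, hεabs]
        rcases Real.sign_apply_eq_of_ne_zero (Y l j) hzero with h | h <;>
          rw [h] <;> norm_num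
      have hT : (0:ℝ) ≤ ∑ k, |X i k| * |Y k j| :=
        Finset.sum_nonneg fun k _ => mul_nonneg (abs_nonneg _) (abs_nonneg _)
      have hnum : |∑ k, X i k * Y k j| = ∑ k, |X i k| * |Y k j| := by
        rw [hsum, abs_mul, abs_mul, hεabs, hsabs, one_mul, one_mul,
          abs_of_nonneg hT]
      have hWpos := hW i
      rw [hYp, abs_div, hnum, abs_of_pos hWpos]
      rw [le_div_iff₀ hWpos]
      have hle : ∀ k, (⨅ r, |Y r j|) ≤ |Y k j| := fun k => ciInf_le (hbdd j) k
      calc (⨅ k, |Y k j|) * ∑ k, |X i k| = ∑ k, |X i k| * (⨅ r, |Y r j|) := by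
            rw [Finset.mul_sum]; apply Finset.sum_congr rfl; intros; ring
        _ ≤ ∑ k, |X i k| * |Y k j| :=
            Finset.sum_le_sum fun k _ =>
              mul_le_mul_of_nonneg_left (hle k) (abs_nonneg _)
  have part1 : ∀ j, (⨅ i, |Y i j|) ≤ ⨅ i, |Yp i j| := fun j =>
    le_ciInf fun i => key i j
  refine ⟨part1, ?_⟩
  apply le_ciInf
  intro i
  apply le_ciInf
  intro j
  calc (⨅ i', ⨅ j', |Y i' j'|) ≤ ⨅ i', |Y i' j| := by
        apply le_ciInf
        intro i'
        calc (⨅ i'', ⨅ j', |Y i'' j'|) ≤ ⨅ j', |Y i' j'| :=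
              ciInf_le (Finite.bddBelow_range _) i'
          _ ≤ |Y i' j| := ciInf_le (Finite.bddBelow_range _) j
    _ ≤ ⨅ i', |Yp i' j| := part1 j
    _ ≤ |Yp i j| := ciInf_le (Finite.bddBelow_range _) i
end

section
/- Let Y ∈ ℝ^{n×1} be a non-zero column vector with all entries non-zero (single-issue case, m = 1). Then one step of the dynamics reaches the fixed point: with X = Dg(|Y|)^{-1} Y Yᵀ and Y⁺ = Dg(|X|1_n)^{-1} X Y, we have Y⁺ = (‖Y‖₂² / ‖Y‖₁) · sgn(Y), where sgn(Y) is the entrywise sign vector. -/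
/-- Single-issue case: from any vector with non-zero entries, one step of the
dynamics reaches Y⁺ = (‖Y‖₂²/‖Y‖₁)·sgn(Y). -/
theorem single_issue_one_step (n : ℕ) (Y : Fin n → ℝ) (hY : ∀ i, Y i ≠ 0)
    (X : Matrix (Fin n) (Fin n) ℝ)
    (hX : ∀ i j, X i j = Y i * Y j / |Y i|)
    (Yp : Fin n → ℝ)
    (hYp : ∀ i, Yp i = (∑ k, X i k * Y k) / (∑ k, |X i k|)) :
    ∀ i, Yp i = ((∑ k, (Y k) ^ 2) / (∑ k, |Y k|)) * Real.sign (Y i) := by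
  intro i
  have hs : Y i / |Y i| = Real.sign (Y i) := by
    rcases lt_or_gt_of_ne (hY i) with h | h
    · rw [abs_of_neg h, Real.sign_of_neg h]
      rw [div_neg, div_self (hY i)]
    · rw [abs_of_pos h, Real.sign_of_pos h]
      field_simp
  have habs : |Real.sign (Y i)| = 1 := by
    rcases lt_or_gt_of_ne (hY i) with h | h
    · rw [Real.sign_of_neg h]; norm_num
    · rw [Real.sign_of_pos h]; norm_num
  have hXk : ∀ k, X i k = Real.sign (Y i) * Y k := by
    intro k
    rw [hX i k, mul_comm (Y i) (Y k), mul_div_assoc, hs, mul_comm]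
  have h1 : (∑ k, X i k * Y k) = Real.sign (Y i) * ∑ k, (Y k) ^ 2 := by
    rw [Finset.mul_sum]
    apply Finset.sum_congr rfl
    intro k _
    rw [hXk k]; ring
  have h2 : (∑ k, |X i k|) = ∑ k, |Y k| := by
    apply Finset.sum_congr rfl
    intro k _
    rw [hXk k, abs_mul, habs, one_mul]
  rw [hYp i, h1, h2, mul_comm, mul_div_assoc]
  ring
end

section
/- Let Y ∈ ℝ^{n×1} be a vector with all entries non-zero. Then Y* = (‖Y‖₂²/‖Y‖₁)·sgn(Y) is a fixed point of the single-issue dynamics f(Y) = Dg(|YYᵀ|1_n)^{-1} Y Yᵀ Y, and the corresponding appraisal matrix X* = (‖Y‖₂²/‖Y‖₁)·sgn(Y)sgn(Y)ᵀ satisfies social balance. -/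
/-- Single-issue case: Y* = (‖Y‖₂²/‖Y‖₁)·sgn(Y) is a fixed point of
f(Y) = Dg(|YYᵀ|1ₙ)⁻¹ Y Yᵀ Y, and the corresponding appraisal matrix
X* = (‖Y‖₂²/‖Y‖₁)·sgn(Y)sgn(Y)ᵀ satisfies social balance. -/
theorem single_issue_fixed_point_balance (n : ℕ) (Y : Fin n → ℝ)
    (hY : ∀ i, Y i ≠ 0)
    (Ystar : Fin n → ℝ)
    (hYstar : ∀ i, Ystar i = ((∑ k, (Y k) ^ 2) / (∑ k, |Y k|)) * Real.sign (Y i))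
    (f : (Fin n → ℝ) → (Fin n → ℝ))
    (hf : ∀ Z i, f Z i = (∑ l, (Z i * Z l) * Z l) / (∑ l, |Z i * Z l|))
    (Xstar : Matrix (Fin n) (Fin n) ℝ)
    (hXstar : ∀ i j, Xstar i j =
      ((∑ k, (Y k) ^ 2) / (∑ k, |Y k|)) * (Real.sign (Y i) * Real.sign (Y j))) :
    (∀ i, f Ystar i = Ystar i) ∧
    (∀ i, 0 < Xstar i i) ∧
    (∀ i j k,
      Real.sign (Xstar i j) * Real.sign (Xstar j k) * Real.sign (Xstar k i) = 1) := by
  have hs : ∀ i, Real.sign (Y i) = 1 ∨ Real.sign (Y i) = -1 := by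
    intro i
    rcases (hY i).lt_or_gt with h | h
    · right; exact Real.sign_of_neg h
    · left; exact Real.sign_of_pos h
  have hs2 : ∀ i, Real.sign (Y i) * Real.sign (Y i) = 1 := by
    intro i; rcases hs i with h | h <;> rw [h] <;> norm_num
  have habs : ∀ i, |Real.sign (Y i)| = 1 := by
    intro i; rcases hs i with h | h <;> rw [h] <;> norm_num
  set c : ℝ := (∑ k, (Y k) ^ 2) / (∑ k, |Y k|) with hc
  have hcpos : ∀ _ : Fin n, 0 < c := by
    intro i
    have h1 : 0 < ∑ k, (Y k) ^ 2 :=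
      Finset.sum_pos (fun k _ => pow_two_pos_of_ne_zero (hY k)) ⟨i, Finset.mem_univ i⟩
    have h2 : 0 < ∑ k, |Y k| :=
      Finset.sum_pos (fun k _ => abs_pos.mpr (hY k)) ⟨i, Finset.mem_univ i⟩
    exact div_pos h1 h2
  refine ⟨?_, ?_, ?_⟩
  · intro i
    have hcp := hcpos i
    rw [hf]
    have hnum : ∀ l, Ystar i * Ystar l * Ystar l = Ystar i * c ^ 2 := by
      intro l
      rw [hYstar l, hYstar i]
      rcases hs l with h | h <;> rw [h] <;> ring
    have hden : ∀ l, |Ystar i * Ystar l| = c ^ 2 := by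
      intro l
      rw [hYstar l, hYstar i, abs_mul, abs_mul, abs_mul, habs, habs,
        abs_of_pos hcp]
      ring
    rw [Finset.sum_congr rfl (fun l _ => hnum l),
      Finset.sum_congr rfl (fun l _ => hden l),
      Finset.sum_const, Finset.sum_const, Finset.card_univ, Fintype.card_fin,
      nsmul_eq_mul, nsmul_eq_mul]
    have hnz : (n : ℝ) * c ^ 2 ≠ 0 := by
      have : 0 < n := Fin.pos_iff_nonempty.mpr ⟨i⟩
      positivity
    field_simp
    exact mul_div_cancel_left₀ _ (left_ne_zero_of_mul hnz)
  · intro i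
    rw [hXstar, hs2]
    simpa using hcpos i
  · intro i j k
    have hsx : ∀ a b : Fin n,
        Real.sign (Xstar a b) = Real.sign (Y a) * Real.sign (Y b) := by
      intro a b
      rw [hXstar]
      rcases hs a with ha | ha <;> rcases hs b with hb | hb <;>
        rw [ha, hb] <;> simp <;>
        first
          | exact Real.sign_of_pos (hcpos a)
          | exact Real.sign_of_neg (neg_lt_zero.mpr (hcpos a))
    rw [hsx, hsx, hsx]
    rcases hs i with hi | hi <;> rcases hs j with hj | hj <;>
      rcases hs k with hk | hk <;> rw [hi, hj, hk] <;> norm_num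
end

section
/- Suppose Y ∈ ℝ^{n×m} has all rows non-zero and its rows satisfy sgn(Y_{a*}) = ±sgn(Y_{b*}) for all a,b (modulus sign-consensus, with some shared sign vector possibly having zero entries only in entirely-zero columns). Then the appraisal matrix X = Dg(|Y|1_m)^{-1} Y Yᵀ satisfies social balance: every entry of X is non-zero, X_ii > 0, and sgn(X_ij)sgn(X_jk)sgn(X_ki) = 1 for all i,j,k. -/
private lemma sign_mul_nonneg {x y : ℝ} (h : Real.sign x = Real.sign y) : 0 ≤ x * y := by
  rcases lt_trichotomy x 0 with hx | hx | hx
  · rw [Real.sign_of_neg hx] at h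
    have hy : y < 0 := by
      rcases lt_trichotomy y 0 with hy | hy | hy
      · exact hy
      · rw [hy, Real.sign_zero] at h; norm_num at h
      · rw [Real.sign_of_pos hy] at h; norm_num at h
    exact le_of_lt (mul_pos_of_neg_of_neg hx hy)
  · simp [hx]
  · rw [Real.sign_of_pos hx] at h
    have hy : 0 < y := by
      rcases lt_trichotomy y 0 with hy | hy | hy
      · rw [Real.sign_of_neg hy] at h; norm_num at h
      · rw [hy, Real.sign_zero] at h; norm_num at h
      · exact hy
    exact le_of_lt (mul_pos hx hy)

private lemma sign_mul_pos {x y : ℝ} (h : Real.sign x = Real.sign y) (hx : x ≠ 0) :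
    0 < x * y := by
  rcases lt_trichotomy x 0 with hx' | hx' | hx'
  · rw [Real.sign_of_neg hx'] at h
    have hy : y < 0 := by
      rcases lt_trichotomy y 0 with hy | hy | hy
      · exact hy
      · rw [hy, Real.sign_zero] at h; norm_num at h
      · rw [Real.sign_of_pos hy] at h; norm_num at h
    exact mul_pos_of_neg_of_neg hx' hy
  · exact absurd hx' hx
  · rw [Real.sign_of_pos hx'] at h
    have hy : 0 < y := by
      rcases lt_trichotomy y 0 with hy | hy | hy
      · rw [Real.sign_of_neg hy] at h; norm_num at h
      · rw [hy, Real.sign_zero] at h; norm_num at h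
      · exact hy
    exact mul_pos hx' hy

private lemma row_exists_ne {n m : ℕ} (Y : Matrix (Fin n) (Fin m) ℝ) (a : Fin n)
    (h : 0 < ∑ k, |Y a k|) : ∃ k, Y a k ≠ 0 := by
  by_contra hc
  push_neg at hc
  simp [hc] at h

private lemma inner_pos {n m : ℕ} (Y : Matrix (Fin n) (Fin m) ℝ) (a b : Fin n)
    (ha : 0 < ∑ k, |Y a k|)
    (h : ∀ k, Real.sign (Y a k) = Real.sign (Y b k)) :
    0 < ∑ k, Y a k * Y b k := by
  obtain ⟨k0, hk0⟩ := row_exists_ne Y a ha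
  apply Finset.sum_pos'
  · intro k _
    exact sign_mul_nonneg (h k)
  · exact ⟨k0, Finset.mem_univ k0, sign_mul_pos (h k0) hk0⟩

private lemma inner_neg {n m : ℕ} (Y : Matrix (Fin n) (Fin m) ℝ) (a b : Fin n)
    (ha : 0 < ∑ k, |Y a k|)
    (h : ∀ k, Real.sign (Y a k) = - Real.sign (Y b k)) :
    ∑ k, Y a k * Y b k < 0 := by
  have h' : ∀ k, Real.sign (Y a k) = Real.sign (-(Y b k)) := by
    intro k; rw [Real.sign_neg]; exact h k
  obtain ⟨k0, hk0⟩ := row_exists_ne Y a ha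
  have hp : 0 < ∑ k, Y a k * (-(Y b k)) := by
    apply Finset.sum_pos'
    · intro k _
      exact sign_mul_nonneg (h' k)
    · exact ⟨k0, Finset.mem_univ k0, sign_mul_pos (h' k0) hk0⟩
  have : ∑ k, Y a k * (-(Y b k)) = - ∑ k, Y a k * Y b k := by
    simp [mul_neg]
  linarith [this ▸ hp]

private lemma sign_contradict {n m : ℕ} (Y : Matrix (Fin n) (Fin m) ℝ) (a b : Fin n)
    (ha : 0 < ∑ k, |Y a k|)
    (h1 : ∀ k, Real.sign (Y a k) = Real.sign (Y b k))
    (h2 : ∀ k, Real.sign (Y a k) = - Real.sign (Y b k)) : False := by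
  obtain ⟨k0, hk0⟩ := row_exists_ne Y a ha
  have : Real.sign (Y a k0) = 0 := by
    have := h1 k0; have := h2 k0; linarith
  rw [Real.sign_eq_zero_iff] at this
  exact hk0 this

/-- If all pairs of rows of Y have equal or opposite sign patterns (modulus
sign-consensus) and all rows are non-zero, then the appraisal matrix
X = Dg(|Y|1ₘ)⁻¹ Y Yᵀ satisfies social balance: all entries non-zero, positive
diagonal, and all triad sign-products equal 1. -/
theorem sign_consensus_implies_balance (n m : ℕ) (Y : Matrix (Fin n) (Fin m) ℝ)
    (hYrow : ∀ i, 0 < ∑ k, |Y i k|)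
    (hsgn : ∀ a b, (∀ k, Real.sign (Y a k) = Real.sign (Y b k)) ∨
                   (∀ k, Real.sign (Y a k) = - Real.sign (Y b k)))
    (X : Matrix (Fin n) (Fin n) ℝ)
    (hX : ∀ i j, X i j = (∑ k, Y i k * Y j k) / (∑ k, |Y i k|)) :
    (∀ i j, X i j ≠ 0) ∧ (∀ i, 0 < X i i) ∧
    (∀ i j k, Real.sign (X i j) * Real.sign (X j k) * Real.sign (X k i) = 1) := by
  have hpos : ∀ a b, (∀ k, Real.sign (Y a k) = Real.sign (Y b k)) → 0 < X a b := by
    intro a b h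
    rw [hX a b]
    exact div_pos (inner_pos Y a b (hYrow a) h) (hYrow a)
  have hneg : ∀ a b, (∀ k, Real.sign (Y a k) = - Real.sign (Y b k)) → X a b < 0 := by
    intro a b h
    rw [hX a b]
    exact div_neg_of_neg_of_pos (inner_neg Y a b (hYrow a) h) (hYrow a)
  have hne : ∀ i j, X i j ≠ 0 := by
    intro i j
    rcases hsgn i j with h | h
    · exact ne_of_gt (hpos i j h)
    · exact ne_of_lt (hneg i j h)
  refine ⟨hne, fun i => hpos i i (fun k => rfl), ?_⟩
  intro i j k
  have contra : ∀ (h1 : ∀ t, Real.sign (Y i t) = Real.sign (Y k t))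
      (h2 : ∀ t, Real.sign (Y i t) = - Real.sign (Y k t)), (X i j).sign * (X j k).sign * (X k i).sign = 1 :=
    fun h1 h2 => (sign_contradict Y i k (hYrow i) h1 h2).elim
  rcases hsgn i j with hij | hij <;> rcases hsgn j k with hjk | hjk <;>
    rcases hsgn k i with hki | hki
  · rw [Real.sign_of_pos (hpos i j hij), Real.sign_of_pos (hpos j k hjk),
      Real.sign_of_pos (hpos k i hki)]; ring
  · exact contra (fun t => by have h1 := hij t; have h2 := hjk t; have h3 := hki t; linarith)
      (fun t => by have h3 := hki t; linarith)
  · exact contra (fun t => by have h3 := hki t; linarith)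
      (fun t => by have h1 := hij t; have h2 := hjk t; linarith)
  · rw [Real.sign_of_pos (hpos i j hij), Real.sign_of_neg (hneg j k hjk),
      Real.sign_of_neg (hneg k i hki)]; ring
  · exact contra (fun t => by have h3 := hki t; linarith)
      (fun t => by have h1 := hij t; have h2 := hjk t; linarith)
  · rw [Real.sign_of_neg (hneg i j hij), Real.sign_of_pos (hpos j k hjk),
      Real.sign_of_neg (hneg k i hki)]; ring
  · rw [Real.sign_of_neg (hneg i j hij), Real.sign_of_neg (hneg j k hjk),
      Real.sign_of_pos (hpos k i hki)]; ring
  · exact contra (fun t => by have h1 := hij t; have h2 := hjk t; linarith)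
      (fun t => by have h3 := hki t; linarith)
end

section
/- Let Y ∈ ℝ^{n×m} with all rows non-zero, X = Dg(|Y|1_m)^{-1} Y Yᵀ with all entries of X non-zero, and Y⁺ = Dg(|X|1_n)^{-1} X Y. If for some column j we have max_i |Y⁺_{ij}| = max_i |Y_{ij}| > 0 and this maximum is attained at some row i, then all entries of column j of Y have absolute value max_i |Y_{ij}|, and sgn(X_{i*}) = ±sgn(Y_{*j}) (the i-th sign row of X coincides with the sign pattern of column j of Y up to a global sign). -/
lemma sign_eq_of_mul_pos {x y : ℝ} (h : 0 < x * y) : Real.sign x = Real.sign y := by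
  rcases mul_pos_iff.1 h with ⟨hx, hy⟩ | ⟨hx, hy⟩
  · rw [Real.sign_of_pos hx, Real.sign_of_pos hy]
  · rw [Real.sign_of_neg hx, Real.sign_of_neg hy]

lemma sign_eq_neg_of_mul_neg {x y : ℝ} (h : x * y < 0) : Real.sign x = - Real.sign y := by
  rcases mul_neg_iff.1 h with ⟨hx, hy⟩ | ⟨hx, hy⟩
  · rw [Real.sign_of_pos hx, Real.sign_of_neg hy]; norm_num
  · rw [Real.sign_of_neg hx, Real.sign_of_pos hy]


/-- LaSalle key step: if after one step the per-column maximum of column j is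
preserved and positive, and row i attains the new maximum, then all entries of
column j of Y have the same (maximal) absolute value and the i-th sign row of
X matches the sign pattern of column j of Y up to a global sign. -/
theorem lasalle_key_step (n m : ℕ) (Y : Matrix (Fin n) (Fin m) ℝ)
    (hYrow : ∀ i, 0 < ∑ k, |Y i k|)
    (X : Matrix (Fin n) (Fin n) ℝ)
    (hX : ∀ i j, X i j = (∑ k, Y i k * Y j k) / (∑ k, |Y i k|))
    (hXnz : ∀ i j, X i j ≠ 0)
    (Yp : Matrix (Fin n) (Fin m) ℝ)
    (hYp : ∀ i j, Yp i j = (∑ k, X i k * Y k j) / (∑ k, |X i k|))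
    (j : Fin m) (i : Fin n)
    (hmaxeq : (⨆ i', |Yp i' j|) = ⨆ i', |Y i' j|)
    (hmaxpos : 0 < ⨆ i', |Y i' j|)
    (hattain : |Yp i j| = ⨆ i', |Yp i' j|) :
    (∀ k, |Y k j| = ⨆ i', |Y i' j|) ∧
    ((∀ k, Real.sign (X i k) = Real.sign (Y k j)) ∨
     (∀ k, Real.sign (X i k) = - Real.sign (Y k j))) := by
  set M := ⨆ i', |Y i' j| with hMdef
  have hbdd : BddAbove (Set.range fun i' => |Y i' j|) :=
    (Set.finite_range _).bddAbove
  have hle : ∀ k, |Y k j| ≤ M := fun k => le_ciSup hbdd k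
  set S := ∑ k, |X i k| with hSdef
  have hS : 0 < S := by
    apply Finset.sum_pos' (fun k _ => abs_nonneg _)
    exact ⟨i, Finset.mem_univ i, abs_pos.2 (hXnz i i)⟩
  have hM : |Yp i j| = M := hattain.trans hmaxeq
  have habs : |∑ k, X i k * Y k j| = M * S := by
    rw [hYp i j] at hM
    rw [abs_div, abs_of_pos hS, div_eq_iff hS.ne'] at hM
    exact hM
  have h1 : |∑ k, X i k * Y k j| ≤ ∑ k, |X i k * Y k j| :=
    Finset.abs_sum_le_sum_abs _ _
  have h2 : ∀ k ∈ Finset.univ, |X i k * Y k j| ≤ |X i k| * M := by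
    intro k _
    rw [abs_mul]
    exact mul_le_mul_of_nonneg_left (hle k) (abs_nonneg _)
  have h3 : ∑ k, |X i k| * M = M * S := by
    rw [← Finset.sum_mul, hSdef, mul_comm]
  have heq2 : ∑ k, |X i k * Y k j| = ∑ k, |X i k| * M := by
    have := Finset.sum_le_sum h2
    have hlow : ∑ k, |X i k| * M ≤ ∑ k, |X i k * Y k j| := by
      rw [h3, ← habs]; exact h1
    exact le_antisymm this hlow
  have hterm : ∀ k, |Y k j| = M := by
    have := (Finset.sum_eq_sum_iff_of_le h2).1 heq2
    intro k
    have hk := this k (Finset.mem_univ k)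
    rw [abs_mul] at hk
    exact mul_left_cancel₀ (abs_ne_zero.2 (hXnz i k)) hk
  have hYnz : ∀ k, Y k j ≠ 0 := by
    intro k
    rw [← abs_ne_zero, hterm k]
    exact (hmaxpos.trans_le (le_of_eq rfl)).ne'
  have habs_eq : |∑ k, X i k * Y k j| = ∑ k, |X i k * Y k j| := by
    rw [habs, heq2, h3]
  refine ⟨hterm, ?_⟩
  have hnn : 0 ≤ ∑ k, |X i k * Y k j| := Finset.sum_nonneg fun k _ => abs_nonneg _
  rcases (abs_eq hnn).1 habs_eq with hcase | hcase
  · left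
    intro k
    have hzero : ∑ k, (|X i k * Y k j| - X i k * Y k j) = 0 := by
      rw [Finset.sum_sub_distrib, hcase, sub_self]
    have hz := (Finset.sum_eq_zero_iff_of_nonneg (fun k _ =>
      sub_nonneg.2 (le_abs_self _))).1 hzero k (Finset.mem_univ k)
    have hne : X i k * Y k j ≠ 0 := mul_ne_zero (hXnz i k) (hYnz k)
    have ht : X i k * Y k j = |X i k * Y k j| := by linarith
    have hpos : 0 < X i k * Y k j := by rw [ht]; exact abs_pos.2 hne
    exact sign_eq_of_mul_pos hpos
  · right
    intro k
    have hzero : ∑ k, (|X i k * Y k j| + X i k * Y k j) = 0 := by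
      rw [Finset.sum_add_distrib, hcase]; ring
    have hz := (Finset.sum_eq_zero_iff_of_nonneg (fun k _ => by
      linarith [neg_abs_le (X i k * Y k j)])).1 hzero k (Finset.mem_univ k)
    have hneg : X i k * Y k j < 0 := by
      have hne : X i k * Y k j ≠ 0 := mul_ne_zero (hXnz i k) (hYnz k)
      have habsk : |X i k * Y k j| = -(X i k * Y k j) := by linarith
      rcases hne.lt_or_gt with h | h
      · exact h
      · exfalso; rw [abs_of_pos h] at habsk; linarith
    exact sign_eq_neg_of_mul_neg hneg
end

section
/- Let Y ∈ ℝ^{n×m} be a matrix satisfying modulus consensus: there exists ε ∈ {−1,+1}^n and a vector v ∈ ℝ^m, v ≠ 0, with Y_{i*} = ε_i v for all i. Then Y is a fixed point of f(Y) = Dg(|YYᵀ|1_n)^{-1} Y Yᵀ Y. -/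
/-- Every modulus-consensus configuration Y_{i*} = ε_i v (ε ∈ {±1}ⁿ, v ≠ 0)
is a fixed point of f(Y) = Dg(|YYᵀ|1ₙ)⁻¹ Y Yᵀ Y. -/
theorem modulus_consensus_fixed_point (n m : ℕ)
    (ε : Fin n → ℝ) (hε : ∀ i, ε i = 1 ∨ ε i = -1)
    (v : Fin m → ℝ) (hv : v ≠ 0)
    (Y : Matrix (Fin n) (Fin m) ℝ) (hY : ∀ i j, Y i j = ε i * v j)
    (f : Matrix (Fin n) (Fin m) ℝ → Matrix (Fin n) (Fin m) ℝ)
    (hf : ∀ Z i j, f Z i j =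
      (∑ l, (∑ k, Z i k * Z l k) * Z l j) / (∑ l, |∑ k, Z i k * Z l k|)) :
    ∀ i j, f Y i j = Y i j := by
  intro i j
  set S : ℝ := ∑ k, v k ^ 2 with hS
  have hSpos : 0 < S := by
    have : ∃ k, v k ≠ 0 := by
      by_contra h
      push_neg at h
      exact hv (funext h)
    obtain ⟨k, hk⟩ := this
    apply Finset.sum_pos' (fun k _ => sq_nonneg _)
    exact ⟨k, Finset.mem_univ k, by positivity⟩
  have hεsq : ∀ l, ε l * ε l = 1 := fun l => by rcases hε l with h | h <;> simp [h]
  have hinner : ∀ l, (∑ k, Y i k * Y l k) = ε i * ε l * S := by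
    intro l
    rw [hS, Finset.mul_sum]
    refine Finset.sum_congr rfl fun k _ => ?_
    rw [hY, hY]; ring
  rw [hf]
  have hnum : (∑ l, (∑ k, Y i k * Y l k) * Y l j) = n * (ε i * S * v j) := by
    have h1 : ∀ l, (∑ k, Y i k * Y l k) * Y l j = ε i * S * v j := by
      intro l
      rw [hinner l, hY]
      calc ε i * ε l * S * (ε l * v j) = (ε l * ε l) * (ε i * S * v j) := by ring
        _ = ε i * S * v j := by rw [hεsq]; ring
    rw [Finset.sum_congr rfl fun l _ => h1 l]
    simp [Finset.sum_const, nsmul_eq_mul]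
  have hden : (∑ l, |∑ k, Y i k * Y l k|) = n * S := by
    have h1 : ∀ l, |∑ k, Y i k * Y l k| = S := by
      intro l
      rw [hinner l, abs_mul, abs_mul, abs_of_pos hSpos]
      rcases hε i with h | h <;> rcases hε l with h' | h' <;> simp [h, h']
    rw [Finset.sum_congr rfl fun l _ => h1 l]
    simp [Finset.sum_const, nsmul_eq_mul]
  have hn : (0:ℝ) < n := by
    have : 0 < n := Fin.pos_iff_nonempty.mpr ⟨i⟩
    exact_mod_cast this
  rw [hnum, hden, hY]
  field_simp
end
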